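/- Let G = (V,E,w) be a connected weighted graph, T a maximum spanning tree of G, and C ⊆ V a subset spanning a single connected component in T (the T-edges inside C form a connected subtree covering C). Then the subtree of T induced by C is a maximum spanning tree of the induced subgraph G[C]. -/

import Mathlib

open scoped Classical
noncomputable section

namespace Bal

variable {V : Type*}

/-- Total weight of the edges of a graph. -/
def totalWeight {α : Type*} [Fintype α] (H : SimpleGraph α) (w : Sym2 α → ℝ) : ℝ :=
  ∑ e : Sym2 α, if e ∈ H.edgeSet then w e else 0

/-- `T` is a maximum spanning tree of `G` w.r.t. the weight `w`. -/
def IsMaxSpanTree {α : Type*} [Fintype α] (G T : SimpleGraph α) (w : Sym2 α → ℝ) : Prop :=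
  T ≤ G ∧ T.IsTree ∧
    ∀ T' : SimpleGraph α, T' ≤ G → T'.IsTree → totalWeight T' w ≤ totalWeight T w

/-- Weight function on the induced subgraph on `C`. -/
def subWeight (w : Sym2 V → ℝ) (C : Set V) : Sym2 C → ℝ :=
  fun e => w (e.map Subtype.val)

/-- Edges of `G` with exactly one endpoint in `C`. -/
def outEdges (G : SimpleGraph V) (C : Set V) : Set (Sym2 V) :=
  {e | e ∈ G.edgeSet ∧ ∃ a b, e = s(a, b) ∧ a ∈ C ∧ b ∉ C}

/-- Edges of `G` with both endpoints in `C`. -/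
def inEdges (G : SimpleGraph V) (C : Set V) : Set (Sym2 V) :=
  {e | e ∈ G.edgeSet ∧ ∀ x ∈ e, x ∈ C}

/-- `max(Out(C))`, with the convention `sSup ∅ = 0`. -/
def maxOut (G : SimpleGraph V) (w : Sym2 V → ℝ) (C : Set V) : ℝ :=
  sSup (w '' outEdges G C)

/-- `min(E(C))`, with the convention that it is `1` for singletons. -/
def minIn (G : SimpleGraph V) (w : Sym2 V → ℝ) (C : Set V) : ℝ :=
  if C.Subsingleton then 1 else sInf (w '' inEdges G C)

/-- `min(MST(C))` : minimum weight of an edge of a maximum spanning tree of `G[C]`,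
with the convention that it is `1` for singletons. -/
def minMST [Fintype V] (G : SimpleGraph V) (w : Sym2 V → ℝ) (C : Set V) : ℝ :=
  if C.Subsingleton then 1
  else if h : ∃ T : SimpleGraph C, IsMaxSpanTree (G.induce C) T (subWeight w C) then
    sInf (subWeight w C '' h.choose.edgeSet)
  else 1

/-- Quality measure of a cluster in a graph: `max(Out(C)) / min(MST(C))`. -/
def phi [Fintype V] (G : SimpleGraph V) (w : Sym2 V → ℝ) (C : Set V) : ℝ :=
  maxOut G w C / minMST G w C

/-- Quality measure of a cluster in a tree: `max(Out(C)) / min(E(C))`. -/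
def phiT (G : SimpleGraph V) (w : Sym2 V → ℝ) (C : Set V) : ℝ :=
  maxOut G w C / minIn G w C

/-- `𝒞` is a partition of `U ⊆ V` into `G`-connected parts. -/
def IsPartitionOn (G : SimpleGraph V) (U : Set V) (𝒞 : Set (Set V)) : Prop :=
  (∀ C ∈ 𝒞, C.Nonempty ∧ C ⊆ U ∧ (G.induce C).Connected) ∧
  (∀ C ∈ 𝒞, ∀ C' ∈ 𝒞, C ≠ C' → Disjoint C C') ∧ ⋃₀ 𝒞 = U

/-- A `k`-clustering of a graph `G` on vertex set `V`. -/
def IsClustering (G : SimpleGraph V) (𝒞 : Set (Set V)) (k : ℕ) : Prop :=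
  IsPartitionOn G Set.univ 𝒞 ∧ 𝒞.ncard = k

/-- Evaluation of a clustering of a graph (min-max quality measure, MST-based). -/
def eval [Fintype V] (G : SimpleGraph V) (w : Sym2 V → ℝ) (𝒞 : Set (Set V)) : ℝ :=
  sSup (phi G w '' 𝒞)

/-- Evaluation of a clustering of a tree. -/
def evalT (G : SimpleGraph V) (w : Sym2 V → ℝ) (𝒞 : Set (Set V)) : ℝ :=
  sSup (phiT G w '' 𝒞)

/-- `𝒞` is an optimal `k`-clustering of `G`. -/
def IsOptimal [Fintype V] (G : SimpleGraph V) (w : Sym2 V → ℝ) (k : ℕ) (𝒞 : Set (Set V)) : Prop :=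
  IsClustering G 𝒞 k ∧ ∀ 𝒟, IsClustering G 𝒟 k → eval G w 𝒞 ≤ eval G w 𝒟

/-- All edge weights lie in the open interval `(0,1)`. -/
def weightsOK (G : SimpleGraph V) (w : Sym2 V → ℝ) : Prop :=
  ∀ e ∈ G.edgeSet, 0 < w e ∧ w e < 1

/-- The set of connected components (as vertex sets) of a graph. -/
def components (G : SimpleGraph V) : Set (Set V) :=
  {C | ∃ x : V, C = {y | G.Reachable x y}}

/-! Exchange argument: for any spanning tree `T'` of `G[C]`, replacing the edges of `T` inside `C`
by those of `T'` keeps the graph connected and, as `T[C]` and `T'` are both trees on `C`, keeps the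
number of edges, so it yields a spanning tree of `G` of weight `w(T) - w(T[C]) + w(T')`.
Maximality of `T` then gives `w(T') ≤ w(T[C])`. -/

end Bal

namespace SimpleGraph

variable {V : Type*} {G H : SimpleGraph V}

lemma reachable_le_of_adj_le_reachable (h : G.Adj ≤ H.Reachable) : G.Reachable ≤ H.Reachable := by
  rw [reachable_eq_reflTransGen, reachable_eq_reflTransGen] at *
  exact Relation.reflTransGen_closed h

lemma Connected.of_adj_le_reachable (hG : G.Connected) (h : G.Adj ≤ H.Reachable) :
    H.Connected :=
  have := hG.nonempty
  .mk fun u v => reachable_le_of_adj_le_reachable h u v (hG.preconnected u v)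

lemma IsTree.of_connected_of_card_edgeSet_eq [Finite V] (hG : G.IsTree) (hH : H.Connected)
    (hcard : Nat.card H.edgeSet = Nat.card G.edgeSet) : H.IsTree :=
  isTree_iff_connected_and_card.2 ⟨hH, hcard ▸ (isTree_iff_connected_and_card.1 hG).2⟩

end SimpleGraph

namespace Bal

open SimpleGraph

variable {V : Type*}

section Weight

variable [Fintype V]

lemma totalWeight_eq_sum_edgeFinset (H : SimpleGraph V) (w : Sym2 V → ℝ) :
    totalWeight H w = ∑ e ∈ H.edgeFinset, w e := by
  rw [totalWeight, ← Finset.sum_filter]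
  congr 1
  ext e
  simp

lemma totalWeight_one (H : SimpleGraph V) : totalWeight H (fun _ => 1) = Nat.card H.edgeSet := by
  rw [totalWeight_eq_sum_edgeFinset, Finset.sum_const, nsmul_one, Nat.card_eq_fintype_card,
    edgeFinset_card]

lemma totalWeight_induce (H : SimpleGraph V) (C : Set V) (w : Sym2 V → ℝ) :
    totalWeight (H.induce C) (subWeight w C) = ∑ e ∈ H.edgeFinset ∩ C.toFinset.sym2, w e := by
  rw [totalWeight_eq_sum_edgeFinset, ← map_edgeFinset_induce, Finset.sum_map]
  rfl

lemma totalWeight_eq_induce_add (H : SimpleGraph V) (C : Set V) (w : Sym2 V → ℝ) :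
    totalWeight H w =
      totalWeight (H.induce C) (subWeight w C) + ∑ e ∈ H.edgeFinset \ C.toFinset.sym2, w e := by
  rw [totalWeight_induce, totalWeight_eq_sum_edgeFinset, Finset.sum_inter_add_sum_sdiff]

end Weight

def replaceInduce (T : SimpleGraph V) (C : Set V) (T' : SimpleGraph C) : SimpleGraph V where
  Adj a b := (T.Adj a b ∧ ¬(a ∈ C ∧ b ∈ C)) ∨
    ∃ (ha : a ∈ C) (hb : b ∈ C), T'.Adj ⟨a, ha⟩ ⟨b, hb⟩
  symm := ⟨by
    rintro a b (⟨h, hn⟩ | ⟨ha, hb, h⟩)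
    · exact Or.inl ⟨h.symm, fun ⟨x, y⟩ => hn ⟨y, x⟩⟩
    · exact Or.inr ⟨hb, ha, h.symm⟩⟩
  loopless := ⟨by
    rintro a (⟨h, -⟩ | ⟨ha, hb, h⟩)
    · exact T.irrefl h
    · exact T'.irrefl h⟩

section replaceInduce

variable {G T : SimpleGraph V} {C : Set V} {T' : SimpleGraph C}

@[simp]
lemma replaceInduce_adj {a b : V} :
    (replaceInduce T C T').Adj a b ↔
      T.Adj a b ∧ ¬(a ∈ C ∧ b ∈ C) ∨ ∃ (ha : a ∈ C) (hb : b ∈ C), T'.Adj ⟨a, ha⟩ ⟨b, hb⟩ :=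
  Iff.rfl

lemma replaceInduce_le (hT : T ≤ G) (hT' : T' ≤ G.induce C) : replaceInduce T C T' ≤ G := by
  rintro a b (⟨h, -⟩ | ⟨ha, hb, h⟩)
  · exact hT h
  · exact hT' h

lemma induce_replaceInduce : (replaceInduce T C T').induce C = T' := by
  ext u v
  simp

lemma edgeFinset_replaceInduce_sdiff [Fintype V] :
    (replaceInduce T C T').edgeFinset \ C.toFinset.sym2 = T.edgeFinset \ C.toFinset.sym2 := by
  ext e
  induction e using Sym2.ind
  simp only [Finset.mem_sdiff, mem_edgeFinset, mem_edgeSet, replaceInduce_adj, Finset.mem_sym2_iff,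
    Sym2.mem_iff, Set.mem_toFinset]
  grind

lemma totalWeight_replaceInduce [Fintype V] (w : Sym2 V → ℝ) :
    totalWeight (replaceInduce T C T') w =
      totalWeight T w - totalWeight (T.induce C) (subWeight w C) + totalWeight T' (subWeight w C) := by
  rw [totalWeight_eq_induce_add (replaceInduce T C T') C, totalWeight_eq_induce_add T C,
    induce_replaceInduce, edgeFinset_replaceInduce_sdiff]
  ring

lemma adj_le_reachable_replaceInduce (hT' : T'.Connected) :
    T.Adj ≤ (replaceInduce T C T').Reachable := by
  intro a b hab
  by_cases hC : a ∈ C ∧ b ∈ C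
  · let f : T' →g replaceInduce T C T' := ⟨Subtype.val, fun h => Or.inr ⟨_, _, h⟩⟩
    exact (hT'.preconnected ⟨a, hC.1⟩ ⟨b, hC.2⟩).map f
  · exact Adj.reachable (Or.inl ⟨hab, hC⟩)

lemma isTree_replaceInduce [Fintype V] (hT : T.IsTree) (hTC : (T.induce C).IsTree)
    (hT' : T'.IsTree) : (replaceInduce T C T').IsTree := by
  refine hT.of_connected_of_card_edgeSet_eq
    (hT.connected.of_adj_le_reachable (adj_le_reachable_replaceInduce hT'.connected)) ?_
  have hcount := totalWeight_replaceInduce (T := T) (C := C) (T' := T') (fun _ => 1)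
  have hcard : Nat.card (T.induce C).edgeSet = Nat.card T'.edgeSet :=
    Nat.add_right_cancel <| (isTree_iff_connected_and_card.1 hTC).2.trans
      (isTree_iff_connected_and_card.1 hT').2.symm
  have hsub : subWeight (fun _ => (1 : ℝ)) C = fun _ => 1 := rfl
  rw [hsub, totalWeight_one, totalWeight_one, totalWeight_one, totalWeight_one, hcard,
    sub_add_cancel] at hcount
  exact_mod_cast hcount

end replaceInduce

theorem statement16_general {V : Type*} [Fintype V] (G : SimpleGraph V) (w : Sym2 V → ℝ)
    (T : SimpleGraph V) (hT : IsMaxSpanTree G T w)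
    (C : Set V) (hCT : (T.induce C).Connected) :
    IsMaxSpanTree (G.induce C) (T.induce C) (subWeight w C) := by
  obtain ⟨hTG, hT, hTmax⟩ := hT
  have hTC : (T.induce C).IsTree := ⟨hCT, hT.isAcyclic.induce C⟩
  refine ⟨comap_monotone _ hTG, hTC, fun T' hT'G hT' => ?_⟩
  have hle := hTmax _ (replaceInduce_le hTG hT'G) (isTree_replaceInduce hT hTC hT')
  rw [totalWeight_replaceInduce] at hle
  linarith

/-- if `C` spans a single connected component of a maximum spanning tree `T`,
then the induced subtree of `T` is a maximum spanning tree of `G[C]`. -/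
theorem statement16 {V : Type*} [Fintype V] (G : SimpleGraph V) (w : Sym2 V → ℝ)
    (hconn : G.Connected) (T : SimpleGraph V) (hT : IsMaxSpanTree G T w)
    (C : Set V) (hCT : (T.induce C).Connected) :
    IsMaxSpanTree (G.induce C) (T.induce C) (subWeight w C) :=
  statement16_general G w T hT C hCT

end Bal
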